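/- arXiv:2508.04804 — 3 statements merged into one kernel-verified Lean document; each statement's English description precedes it below -/
import Mathlib

section
/- Let s and t be integers with s ≥ 1, t ≥ 1 and N := s² + t² > 4, and let a, b, c be nonnegative real numbers such that 2N·a < (N − √(N² − 4N))·(s·b + t·c). If s·a − b ≥ 0 and t·a − c ≥ 0, then 2N·a > (N + √(N² − 4N))·(s·(s·a − b) + t·(t·a − c)). -/
/-- First assertion of Lemma 3.1: if `a/(s·b+t·c) < 1/2 − √(N²−4N)/(2N)` (in
cross-multiplied form) and the `s₂s₃`-reflected triple `(a, s·a−b, t·a−c)` has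
nonnegative entries, then the reflected ratio exceeds `1/2 + √(N²−4N)/(2N)`. -/
theorem stmt_0 (s t : ℤ) (hs : 1 ≤ s) (ht : 1 ≤ t)
    (N : ℝ) (hN : N = (s : ℝ) ^ 2 + (t : ℝ) ^ 2) (hN4 : 4 < N)
    (a b c : ℝ) (ha : 0 ≤ a) (hb : 0 ≤ b) (hc : 0 ≤ c)
    (h : 2 * N * a < (N - Real.sqrt (N ^ 2 - 4 * N)) * ((s : ℝ) * b + (t : ℝ) * c))
    (h1 : 0 ≤ (s : ℝ) * a - b) (h2 : 0 ≤ (t : ℝ) * a - c) :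
    2 * N * a > (N + Real.sqrt (N ^ 2 - 4 * N)) *
      ((s : ℝ) * ((s : ℝ) * a - b) + (t : ℝ) * ((t : ℝ) * a - c)) := by
  set D := Real.sqrt (N ^ 2 - 4 * N) with hDdef
  set S := (s : ℝ) * b + (t : ℝ) * c with hSdef
  have hDnn : 0 ≤ D := Real.sqrt_nonneg _
  have hDsq : D ^ 2 = N ^ 2 - 4 * N := by
    rw [hDdef, Real.sq_sqrt]; nlinarith
  have hNDpos : (0:ℝ) < N + D := by nlinarith
  -- multiply h by (N+D): 2Na(N+D) < (N²−D²)S = 4N·S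
  have h' : 2 * N * a * (N + D) < 4 * N * S := by
    have e : (N - D) * S * (N + D) = (N ^ 2 - D ^ 2) * S := by ring
    have := mul_lt_mul_of_pos_right h hNDpos
    rw [e, hDsq] at this
    linarith
  have key : 0 < 2 * S - (N + D) * a := by nlinarith
  have key2 : 0 < (N + D) * (2 * S - (N + D) * a) := mul_pos hNDpos key
  have hid : (s : ℝ) * ((s : ℝ) * a - b) + (t : ℝ) * ((t : ℝ) * a - c) = N * a - S := by
    rw [hN, hSdef]; ring
  rw [hid]
  nlinarith [key2]
end

section
/- Let s and t be integers with s ≥ 1, t ≥ 1 and N := s² + t² ≥ 5. Let S be a set of triples (a, b, c) of integers such that: every (a, b, c) ∈ S satisfies a ≥ 0, b ≥ 0, c ≥ 0 and (a, b, c) ≠ (0, 0, 0); and for every (a, b, c) ∈ S, both (s·b + t·c − a, b, c) ∈ S and (a, s·a − b, t·a − c) ∈ S. Then every (a, b, c) ∈ S satisfies (N − √(N² − 4N))·(s·b + t·c) < 2N·a and 2N·a < (N + √(N² − 4N))·(s·b + t·c), and in particular a < s·b + t·c. -/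
set_option maxHeartbeats 1000000

/-- Lemma 3.2: if `S` is a set of nonzero triples of nonnegative integers closed
under the reflections `s₁ : (a,b,c) ↦ (s·b+t·c−a, b, c)` and
`s₂s₃ : (a,b,c) ↦ (a, s·a−b, t·a−c)`, then every `(a,b,c) ∈ S` satisfies
`1/2 − √(N²−4N)/(2N) < a/(s·b+t·c) < 1/2 + √(N²−4N)/(2N)`, in cross-multiplied
form, and in particular `a < s·b + t·c`. -/
theorem stmt_2 (s t : ℤ) (hs : 1 ≤ s) (ht : 1 ≤ t) (hN5 : 5 ≤ s ^ 2 + t ^ 2)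
    (N : ℝ) (hN : N = (s : ℝ) ^ 2 + (t : ℝ) ^ 2)
    (S : Set (ℤ × ℤ × ℤ))
    (hpos : ∀ p ∈ S, 0 ≤ p.1 ∧ 0 ≤ p.2.1 ∧ 0 ≤ p.2.2 ∧ p ≠ (0, 0, 0))
    (hrefl : ∀ a b c : ℤ, (a, b, c) ∈ S →
      (s * b + t * c - a, b, c) ∈ S ∧ (a, s * a - b, t * a - c) ∈ S) :
    ∀ a b c : ℤ, (a, b, c) ∈ S →
      ((N - Real.sqrt (N ^ 2 - 4 * N)) * ((s : ℝ) * (b : ℝ) + (t : ℝ) * (c : ℝ))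
          < 2 * N * (a : ℝ)) ∧
      (2 * N * (a : ℝ)
          < (N + Real.sqrt (N ^ 2 - 4 * N)) * ((s : ℝ) * (b : ℝ) + (t : ℝ) * (c : ℝ))) ∧
      a < s * b + t * c := by
  -- Step 1: every element of S has first coordinate ≥ 1.
  have hA : ∀ a b c : ℤ, (a, b, c) ∈ S → 1 ≤ a := by
    intro a b c hp
    obtain ⟨ha, hb, hc, hne⟩ := hpos _ hp
    simp only at ha hb hc
    obtain ⟨_, hb', hc', _⟩ := hpos _ (hrefl a b c hp).2
    simp only at hb' hc'
    by_contra h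
    have ha0 : a = 0 := by omega
    subst ha0
    have hb0 : b = 0 := by nlinarith
    have hc0 : c = 0 := by nlinarith
    subst hb0; subst hc0
    exact hne rfl
  -- Step 2: every element of S has a < s*b + t*c.
  have hB : ∀ a b c : ℤ, (a, b, c) ∈ S → a < s * b + t * c := by
    intro a b c hp
    have := hA _ _ _ (hrefl a b c hp).1
    omega
  -- Step 3: the key quadratic inequality, by descent on a + (s*b+t*c).
  have key : ∀ n : ℕ, ∀ a b c : ℤ, (a, b, c) ∈ S → a + (s * b + t * c) ≤ (n : ℤ) →
      (s ^ 2 + t ^ 2) * a ^ 2 - (s ^ 2 + t ^ 2) * a * (s * b + t * c)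
        + (s * b + t * c) ^ 2 < 0 := by
    intro n
    induction n with
    | zero =>
      intro a b c hm hle
      have h1 := hA _ _ _ hm
      have h2 := hB _ _ _ hm
      exfalso
      push_cast at hle
      linarith
    | succ n ih =>
      intro a b c hm hle
      have hx := hA _ _ _ hm
      have hy := hB _ _ _ hm
      have ha2 : 1 ≤ a ^ 2 := by nlinarith
      set y := s * b + t * c with hy_def
      rcases lt_trichotomy y (2 * a) with h | h | h
      · -- reflect by s₁ : new first coordinate y - a
        have hm' := (hrefl a b c hm).1
        have hx' := hA _ _ _ hm'
        have hsum : (y - a) + (s * b + t * c) ≤ (n : ℤ) := by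
          push_cast at hle
          rw [← hy_def]
          linarith
        have hq := ih (y - a) b c hm' hsum
        rw [← hy_def] at hq
        nlinarith [hq]
      · -- y = 2a : directly negative
        rw [h]
        nlinarith
      · -- y > 2a : reflect by s₂s₃
        by_contra hq
        push_neg at hq
        have h2y : (s ^ 2 + t ^ 2) * a < 2 * y := by nlinarith
        have hm' := (hrefl a b c hm).2
        have e : s * (s * a - b) + t * (t * a - c) = (s ^ 2 + t ^ 2) * a - y := by
          rw [hy_def]; ring
        have hsum : a + (s * (s * a - b) + t * (t * a - c)) ≤ (n : ℤ) := by
          rw [e]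
          push_cast at hle
          linarith
        have hq2 := ih a (s * a - b) (t * a - c) hm' hsum
        rw [e] at hq2
        nlinarith [hq2]
  -- Step 4: conclude over ℝ.
  intro a b c hm
  have hx := hA _ _ _ hm
  have hy := hB _ _ _ hm
  have hQz := key (a + (s * b + t * c)).toNat a b c hm (by
    have : (0:ℤ) ≤ a + (s * b + t * c) := by linarith
    omega)
  -- cast to ℝ
  set Y : ℝ := (s : ℝ) * (b : ℝ) + (t : ℝ) * (c : ℝ) with hY_def
  have hQr : N * (a : ℝ) ^ 2 - N * (a : ℝ) * Y + Y ^ 2 < 0 := by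
    rw [hN, hY_def]
    exact_mod_cast hQz
  have hN5r : (5 : ℝ) ≤ N := by rw [hN]; exact_mod_cast hN5
  have hXr : (1 : ℝ) ≤ (a : ℝ) := by exact_mod_cast hx
  have hY2 : (a : ℝ) + 1 ≤ Y := by
    have h' : ((a + 1 : ℤ) : ℝ) ≤ ((s * b + t * c : ℤ) : ℝ) := by
      exact_mod_cast (by linarith : a + 1 ≤ s * b + t * c)
    push_cast at h'
    rw [hY_def]; linarith
  have hYpos : (0 : ℝ) < Y := by linarith
  have hD : (0 : ℝ) ≤ N ^ 2 - 4 * N := by nlinarith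
  have hsq : Real.sqrt (N ^ 2 - 4 * N) ^ 2 = N ^ 2 - 4 * N := Real.sq_sqrt hD
  have h4NQ : 4 * N * (N * (a : ℝ) ^ 2 - N * (a : ℝ) * Y + Y ^ 2) < 0 :=
    mul_neg_of_pos_of_neg (by linarith) hQr
  have h1 : (2 * N * (a : ℝ) - N * Y) ^ 2 < (Real.sqrt (N ^ 2 - 4 * N) * Y) ^ 2 := by
    rw [mul_pow, hsq]
    nlinarith [h4NQ]
  have hsqY : 0 ≤ Real.sqrt (N ^ 2 - 4 * N) * Y :=
    mul_nonneg (Real.sqrt_nonneg _) (le_of_lt hYpos)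
  have habs : |2 * N * (a : ℝ) - N * Y| < Real.sqrt (N ^ 2 - 4 * N) * Y := by
    refine lt_of_pow_lt_pow_left₀ 2 hsqY ?_
    rwa [sq_abs]
  obtain ⟨hl, hr⟩ := abs_lt.mp habs
  refine ⟨by nlinarith [hl], by nlinarith [hr], hy⟩
end

section
/- Let s and t be integers with s ≥ 1, t ≥ 1 and N := s² + t² ≥ 5, and let a, b, c be nonnegative real numbers with s·b + t·c > 0. If 2N·a ≤ (N − √(N² − 4N))·(s·b + t·c), then a + s·(s·a − b) + t·(t·a − c) < a + s·b + t·c. -/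
/-- Height decrease under the reflection `s₂s₃ : (a,b,c) ↦ (a, s·a−b, t·a−c)`:
if `a/(s·b+t·c) ≤ 1/2 − √(N²−4N)/(2N)` (cross-multiplied form), then the height
`a + s·b + t·c` strictly decreases. -/
theorem stmt_3 (s t : ℤ) (hs : 1 ≤ s) (ht : 1 ≤ t) (hN5 : 5 ≤ s ^ 2 + t ^ 2)
    (N : ℝ) (hN : N = (s : ℝ) ^ 2 + (t : ℝ) ^ 2)
    (a b c : ℝ) (ha : 0 ≤ a) (hb : 0 ≤ b) (hc : 0 ≤ c)
    (hpos : 0 < (s : ℝ) * b + (t : ℝ) * c)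
    (h : 2 * N * a ≤ (N - Real.sqrt (N ^ 2 - 4 * N)) * ((s : ℝ) * b + (t : ℝ) * c)) :
    a + (s : ℝ) * ((s : ℝ) * a - b) + (t : ℝ) * ((t : ℝ) * a - c)
      < a + (s : ℝ) * b + (t : ℝ) * c := by
  have hN5' : (5 : ℝ) ≤ N := by
    rw [hN]
    have : ((5:ℤ):ℝ) ≤ ((s ^ 2 + t ^ 2 : ℤ) : ℝ) := Int.cast_le.2 hN5
    push_cast at this ⊢
    linarith
  have hnn : 0 ≤ N ^ 2 - 4 * N := by nlinarith
  set r := Real.sqrt (N ^ 2 - 4 * N) with hr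
  have hr0 : 0 ≤ r := Real.sqrt_nonneg _
  have hr2 : r ^ 2 = N ^ 2 - 4 * N := Real.sq_sqrt hnn
  have hlt : N - r < 4 := by nlinarith [sq_nonneg (r - (N - 4))]
  have key : 2 * N * a < 4 * ((s : ℝ) * b + (t : ℝ) * c) := by
    calc 2 * N * a ≤ (N - r) * ((s : ℝ) * b + (t : ℝ) * c) := h
      _ < 4 * ((s : ℝ) * b + (t : ℝ) * c) := by
          exact mul_lt_mul_of_pos_right hlt hpos
  nlinarith [key]
end
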